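/- arXiv:1710.09417 — 5 statements merged into one kernel-verified Lean document; each statement's English description precedes it below -/
import Mathlib

section
/- Suppose that Σ_{j∈P_a} e^{−w_{a,j}} = 1 for every a ∈ A, and that some a* ∈ A has |P_{a*}| ≥ 2. If there exists a valid assignment, then every maximum-weight stable set S of the associated graph G satisfies z(S) > M·(n_A − 1). -/
/-!
A valid assignment `f` gives the stable set `{(a, f a)}` of `G`, of weight
`n_A · M - ∑ₐ w_{a,f(a)}`. The normalization `∑ⱼ e^{-w_{a*,j}} = 1` with at least two
terms forces every `w_{a*,j}` to be positive, so the weights of `f` miss at least one positive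
summand of `M`, i.e. `∑ₐ w_{a,f(a)} < M`.
-/

/-- The associated graph of a `K`-Matching instance: vertices are pairs `(a, j)` with
`j ∈ P a`; distinct vertices `(a,j)`, `(a',j')` are adjacent iff `a = a'` or
(`a ≠ a'` and) `j ∩ j' ≠ ∅`. -/
def kmGraph {A B : Type*} [DecidableEq B] (P : A → Finset (Finset B)) :
    SimpleGraph {v : A × Finset B // v.2 ∈ P v.1} where
  Adj v w := v ≠ w ∧ (v.1.1 = w.1.1 ∨ (v.1.2 ∩ w.1.2).Nonempty)
  symm := by
    constructor
    rintro v w ⟨h1, h2⟩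
    refine ⟨h1.symm, ?_⟩
    rcases h2 with h | h
    · exact Or.inl h.symm
    · exact Or.inr (by rwa [Finset.inter_comm])
  loopless := ⟨fun v h => h.1 rfl⟩

open Finset

lemma pos_of_sum_exp_neg_le_one {ι : Type*} {s : Finset ι} {w : ι → ℝ}
    (hsum : ∑ k ∈ s, Real.exp (-w k) ≤ 1) {i j : ι} (hij : i ≠ j) (hi : i ∈ s) (hj : j ∈ s) :
    0 < w j := by
  have hlt : Real.exp (-w j) < 1 :=
    (single_lt_sum (f := fun k => Real.exp (-w k)) hij hj hi (Real.exp_pos _)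
      fun k _ _ => (Real.exp_pos _).le).trans_le hsum
  simpa using hlt

section Assignment

variable {A B : Type*} [Fintype A] {P : A → Finset (Finset B)}

def assignmentVertices (f : A → Finset B) (hf : ∀ a, f a ∈ P a) :
    Finset {v : A × Finset B // v.2 ∈ P v.1} :=
  univ.map ⟨fun a => ⟨(a, f a), hf a⟩, fun _ _ h => congrArg (fun v => v.1.1) h⟩

lemma sum_assignmentVertices (f : A → Finset B) (hf : ∀ a, f a ∈ P a)
    (g : A → Finset B → ℝ) :
    ∑ v ∈ assignmentVertices f hf, g v.1.1 v.1.2 = ∑ a, g a (f a) :=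
  sum_map _ _ _

lemma kmGraph_not_adj_assignmentVertices [DecidableEq B] {f : A → Finset B}
    (hf : ∀ a, f a ∈ P a)
    (hdisj : ∀ a₁ a₂ : A, a₁ ≠ a₂ → f a₁ ∩ f a₂ = ∅) :
    ∀ u ∈ assignmentVertices f hf, ∀ v ∈ assignmentVertices f hf, ¬ (kmGraph P).Adj u v := by
  simp only [assignmentVertices, mem_map, mem_univ, true_and]
  rintro _ ⟨a, rfl⟩ _ ⟨b, rfl⟩ ⟨hne, hadj⟩
  have hab : a ≠ b := by rintro rfl; exact hne rfl
  rcases hadj with h | h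
  · exact hab h
  · exact Nonempty.ne_empty (s := f a ∩ f b) h (hdisj a b hab)

end Assignment

lemma sum_assignment_lt_sum {A B : Type*} [Fintype A] {P : A → Finset (Finset B)}
    {w : A → Finset B → ℝ} (hw : ∀ a, ∀ j ∈ P a, 0 ≤ w a j)
    (hnorm : ∀ a, ∑ j ∈ P a, Real.exp (-(w a j)) ≤ 1)
    (hstar : ∃ a : A, 2 ≤ (P a).card) {f : A → Finset B} (hf : ∀ a, f a ∈ P a) :
    ∑ a, w a (f a) < ∑ a, ∑ j ∈ P a, w a j := by
  obtain ⟨a₀, ha₀⟩ := hstar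
  obtain ⟨j, hj, hjf⟩ := exists_mem_ne ha₀ (f a₀)
  have hpos : 0 < w a₀ j := pos_of_sum_exp_neg_le_one (hnorm a₀) hjf.symm (hf a₀) hj
  refine sum_lt_sum (fun a _ => single_le_sum (hw a) (hf a)) ⟨a₀, mem_univ _, ?_⟩
  exact single_lt_sum hjf (hf a₀) hj hpos fun k hk _ => hw a₀ k hk

theorem stmt_2_general {A B : Type*} [Fintype A] [DecidableEq B]
    (P : A → Finset (Finset B))
    (w : A → Finset B → ℝ) (hw : ∀ a, ∀ j ∈ P a, 0 ≤ w a j)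
    (hnorm : ∀ a, ∑ j ∈ P a, Real.exp (-(w a j)) = 1)
    (hstar : ∃ a : A, 2 ≤ (P a).card)
    (hfeas : ∃ f : A → Finset B, (∀ a, f a ∈ P a) ∧
      (∀ a₁ a₂ : A, a₁ ≠ a₂ → f a₁ ∩ f a₂ = ∅))
    (M : ℝ) (hM : M = ∑ a, ∑ j ∈ P a, w a j)
    (S : Finset {v : A × Finset B // v.2 ∈ P v.1})
    (hSmax : ∀ S' : Finset {v : A × Finset B // v.2 ∈ P v.1},
      (∀ u ∈ S', ∀ v ∈ S', ¬ (kmGraph P).Adj u v) →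
      ∑ v ∈ S', (M - w v.1.1 v.1.2) ≤ ∑ v ∈ S, (M - w v.1.1 v.1.2)) :
    M * ((Fintype.card A : ℝ) - 1) < ∑ v ∈ S, (M - w v.1.1 v.1.2) := by
  obtain ⟨f, hf, hdisj⟩ := hfeas
  have hle := hSmax _ (kmGraph_not_adj_assignmentVertices hf hdisj)
  rw [sum_assignmentVertices f hf (fun a j => M - w a j), sum_sub_distrib, sum_const,
    card_univ, nsmul_eq_mul] at hle
  have hlt : ∑ a, w a (f a) < M :=
    hM ▸ sum_assignment_lt_sum hw (fun a => (hnorm a).le) hstar hf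
  linarith

/-- if the weights are normalized (`∑_{j ∈ P a} e^{−w_{a,j}} = 1`), some
`a*` has `|P a*| ≥ 2`, and a valid assignment exists, then every maximum-weight stable
set `S` of the associated graph satisfies `z(S) > M·(n_A − 1)`. -/
theorem stmt_2 {A B : Type*} [Fintype A] [DecidableEq A] [DecidableEq B]
    (K : ℕ) (P : A → Finset (Finset B))
    (hPK : ∀ a, ∀ j ∈ P a, j.card ≤ K)
    (w : A → Finset B → ℝ) (hw : ∀ a, ∀ j ∈ P a, 0 ≤ w a j)
    (hnorm : ∀ a, ∑ j ∈ P a, Real.exp (-(w a j)) = 1)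
    (hstar : ∃ a : A, 2 ≤ (P a).card)
    (hfeas : ∃ f : A → Finset B, (∀ a, f a ∈ P a) ∧
      (∀ a₁ a₂ : A, a₁ ≠ a₂ → f a₁ ∩ f a₂ = ∅))
    (M : ℝ) (hM : M = ∑ a, ∑ j ∈ P a, w a j)
    (S : Finset {v : A × Finset B // v.2 ∈ P v.1})
    (hSstable : ∀ u ∈ S, ∀ v ∈ S, ¬ (kmGraph P).Adj u v)
    (hSmax : ∀ S' : Finset {v : A × Finset B // v.2 ∈ P v.1},
      (∀ u ∈ S', ∀ v ∈ S', ¬ (kmGraph P).Adj u v) →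
      ∑ v ∈ S', (M - w v.1.1 v.1.2) ≤ ∑ v ∈ S, (M - w v.1.1 v.1.2)) :
    M * ((Fintype.card A : ℝ) - 1) < ∑ v ∈ S, (M - w v.1.1 v.1.2) :=
  stmt_2_general P w hw hnorm hstar hfeas M hM S hSmax
end

section
/- If S is a stable set of the associated graph G with z(S) > M·(n_A − 1), then for every a ∈ A there is exactly one j ∈ P_a with (a,j) ∈ S, and the function f defined by f(a) = j whenever (a,j) ∈ S is a valid assignment; moreover z(S) = M·n_A − w(f). -/
/-!
Vertices of `S` with the same first coordinate are adjacent, so `v ↦ v.1.1` is injective on a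
stable set and `|S| ≤ n_A`. Since every vertex weight `M - w` lies in `[0, M]`, the bound
`z(S) > M·(n_A − 1)` forces `|S| ≥ n_A`. Hence `S` picks exactly one vertex over each `a`, and
stability across distinct `a` makes the chosen sets pairwise disjoint.
-/

open Finset

theorem le_card_of_mul_sub_one_lt_sum {ι : Type*} {S : Finset ι} {g : ι → ℝ} {M : ℝ}
    (hM : 0 ≤ M) (hg : ∀ i ∈ S, g i ≤ M) {n : ℕ} (h : M * ((n : ℝ) - 1) < ∑ i ∈ S, g i) :
    n ≤ #S := by
  by_contra! hlt
  have hS : (#S : ℝ) ≤ n - 1 := by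
    have : (#S : ℝ) + 1 ≤ n := by exact_mod_cast hlt
    linarith
  have : ∑ i ∈ S, g i ≤ M * (n - 1) := calc
    ∑ i ∈ S, g i ≤ #S • M := sum_le_card_nsmul S g M hg
    _ = M * #S := by rw [nsmul_eq_mul, mul_comm]
    _ ≤ M * (n - 1) := mul_le_mul_of_nonneg_left hS hM
  linarith

section ImageEqUniv

variable {α β : Type*} [DecidableEq β] [Fintype β] {S : Finset α} {φ : α → β}

theorem image_eq_univ_of_injOn_of_card_le (hφ : Set.InjOn φ S)
    (h : Fintype.card β ≤ #S) : S.image φ = univ :=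
  eq_univ_of_card _ <| le_antisymm (card_le_univ _) (h.trans_eq (card_image_of_injOn hφ).symm)

theorem existsUnique_mem_apply_eq_of_image_eq_univ (hφ : Set.InjOn φ S)
    (hS : S.image φ = univ) (b : β) : ∃! x, x ∈ S ∧ φ x = b := by
  obtain ⟨x, hx, rfl⟩ := mem_image.1 (hS ▸ mem_univ b)
  exact ⟨x, ⟨hx, rfl⟩, fun y ⟨hy, hyx⟩ => hφ hy hx hyx⟩

theorem sum_comp_eq_sum_univ_of_image_eq_univ {R : Type*} [AddCommMonoid R]
    (hφ : Set.InjOn φ S) (hS : S.image φ = univ) (g : β → R) :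
    ∑ x ∈ S, g (φ x) = ∑ b, g b := by
  rw [← hS, sum_image hφ]

end ImageEqUniv

section KMatching

variable {A B : Type*} [DecidableEq B] {P : A → Finset (Finset B)}
  {S : Finset {v : A × Finset B // v.2 ∈ P v.1}}

def IsValidAssignment (P : A → Finset (Finset B)) (f : A → Finset B) : Prop :=
  (∀ a, f a ∈ P a) ∧ ∀ a₁ a₂, a₁ ≠ a₂ → f a₁ ∩ f a₂ = ∅

theorem injOn_fst_of_kmGraph_indep (hS : ∀ u ∈ S, ∀ v ∈ S, ¬ (kmGraph P).Adj u v) :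
    Set.InjOn (fun v : {v : A × Finset B // v.2 ∈ P v.1} => v.1.1) S :=
  fun u hu v hv h => by_contra fun hne => hS u hu v hv ⟨hne, Or.inl h⟩

theorem inter_eq_empty_of_kmGraph_indep (hS : ∀ u ∈ S, ∀ v ∈ S, ¬ (kmGraph P).Adj u v)
    {u v : {v : A × Finset B // v.2 ∈ P v.1}} (hu : u ∈ S) (hv : v ∈ S)
    (h : u.1.1 ≠ v.1.1) :
    u.1.2 ∩ v.1.2 = ∅ :=
  not_nonempty_iff_eq_empty.1 fun hne =>
    hS u hu v hv ⟨fun huv => h (congrArg (fun x => x.1.1) huv), Or.inr hne⟩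

theorem isValidAssignment_of_kmGraph_indep [Fintype A] [DecidableEq A]
    (hS : ∀ u ∈ S, ∀ v ∈ S, ¬ (kmGraph P).Adj u v) (himg : S.image (fun v => v.1.1) = univ)
    {f : A → Finset B} (hf : ∀ v ∈ S, f v.1.1 = v.1.2) : IsValidAssignment P f := by
  have hcover : ∀ a, ∃ v ∈ S, v.1.1 = a := fun a => mem_image.1 (himg ▸ mem_univ a)
  refine ⟨fun a => ?_, fun a₁ a₂ hne => ?_⟩
  · obtain ⟨v, hv, rfl⟩ := hcover a
    exact hf v hv ▸ v.2
  · obtain ⟨u, hu, rfl⟩ := hcover a₁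
    obtain ⟨v, hv, rfl⟩ := hcover a₂
    rw [hf u hu, hf v hv]
    exact inter_eq_empty_of_kmGraph_indep hS hu hv hne

end KMatching

theorem stmt_3_general {A B : Type*} [Fintype A] [DecidableEq A] [DecidableEq B]
    (P : A → Finset (Finset B))
    (w : A → Finset B → ℝ) (hw : ∀ a, ∀ j ∈ P a, 0 ≤ w a j)
    (M : ℝ) (hM : M = ∑ a, ∑ j ∈ P a, w a j)
    (S : Finset {v : A × Finset B // v.2 ∈ P v.1})
    (hSstable : ∀ u ∈ S, ∀ v ∈ S, ¬ (kmGraph P).Adj u v)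
    (hSgt : M * ((Fintype.card A : ℝ) - 1) < ∑ v ∈ S, (M - w v.1.1 v.1.2)) :
    (∀ a : A, ∃! v : {v : A × Finset B // v.2 ∈ P v.1}, v ∈ S ∧ v.1.1 = a) ∧
    ∀ f : A → Finset B, (∀ v ∈ S, f v.1.1 = v.1.2) →
      (∀ a, f a ∈ P a) ∧
      (∀ a₁ a₂ : A, a₁ ≠ a₂ → f a₁ ∩ f a₂ = ∅) ∧
      ∑ v ∈ S, (M - w v.1.1 v.1.2) = M * (Fintype.card A : ℝ) - ∑ a, w a (f a) := by
  have hM0 : 0 ≤ M := hM ▸ sum_nonneg fun a _ => sum_nonneg (hw a)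
  have hinj := injOn_fst_of_kmGraph_indep hSstable
  have hcard : Fintype.card A ≤ #S :=
    le_card_of_mul_sub_one_lt_sum hM0 (fun v _ => sub_le_self _ (hw _ _ v.2)) hSgt
  have himg := image_eq_univ_of_injOn_of_card_le hinj hcard
  refine ⟨existsUnique_mem_apply_eq_of_image_eq_univ hinj himg, fun f hf => ?_⟩
  obtain ⟨hfP, hfdisj⟩ := isValidAssignment_of_kmGraph_indep hSstable himg hf
  refine ⟨hfP, hfdisj, ?_⟩
  have hSA : #S = Fintype.card A := by rw [← card_image_of_injOn hinj, himg, card_univ]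
  calc ∑ v ∈ S, (M - w v.1.1 v.1.2) = #S * M - ∑ v ∈ S, w v.1.1 (f v.1.1) := by
        rw [sum_sub_distrib, sum_const, nsmul_eq_mul]
        exact congrArg _ (sum_congr rfl fun v hv => by rw [hf v hv])
    _ = M * Fintype.card A - ∑ a, w a (f a) := by
        rw [hSA, sum_comp_eq_sum_univ_of_image_eq_univ hinj himg (fun a => w a (f a)), mul_comm]

/-- if `S` is a stable set of the associated graph with
`z(S) > M·(n_A − 1)`, then every `a ∈ A` lies under exactly one vertex of `S`, and any
function `f` with `f a = j` whenever `(a,j) ∈ S` is a valid assignment with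
`z(S) = M·n_A − w(f)`. -/
theorem stmt_3 {A B : Type*} [Fintype A] [DecidableEq A] [DecidableEq B]
    (K : ℕ) (P : A → Finset (Finset B))
    (hPK : ∀ a, ∀ j ∈ P a, j.card ≤ K)
    (w : A → Finset B → ℝ) (hw : ∀ a, ∀ j ∈ P a, 0 ≤ w a j)
    (M : ℝ) (hM : M = ∑ a, ∑ j ∈ P a, w a j)
    (S : Finset {v : A × Finset B // v.2 ∈ P v.1})
    (hSstable : ∀ u ∈ S, ∀ v ∈ S, ¬ (kmGraph P).Adj u v)
    (hSgt : M * ((Fintype.card A : ℝ) - 1) < ∑ v ∈ S, (M - w v.1.1 v.1.2)) :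
    (∀ a : A, ∃! v : {v : A × Finset B // v.2 ∈ P v.1}, v ∈ S ∧ v.1.1 = a) ∧
    ∀ f : A → Finset B, (∀ v ∈ S, f v.1.1 = v.1.2) →
      (∀ a, f a ∈ P a) ∧
      (∀ a₁ a₂ : A, a₁ ≠ a₂ → f a₁ ∩ f a₂ = ∅) ∧
      ∑ v ∈ S, (M - w v.1.1 v.1.2) = M * (Fintype.card A : ℝ) - ∑ a, w a (f a) :=
  stmt_3_general P w hw M hM S hSstable hSgt
end

section
/- Let S be a maximum-weight stable set of the associated graph G with z(S) > M·(n_A − 1), and let f be the valid assignment defined by f(a) = j whenever (a,j) ∈ S. Then f is an optimal assignment, i.e., w(f) ≤ w(g) for every valid assignment g. -/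
open Finset

theorem le_card_of_mul_sub_one_lt_sum_s4 {β K : Type*} [Field K] [LinearOrder K]
    [IsStrictOrderedRing K] {S : Finset β} {z : β → K} {M : K} (n : ℕ)
    (hz : ∀ v ∈ S, z v ≤ M) (hM : 0 ≤ M)
    (hlt : M * ((n : K) - 1) < ∑ v ∈ S, z v) : n ≤ #S := by
  have hsum : ∑ v ∈ S, z v ≤ #S * M := by
    simpa [sum_const, nsmul_eq_mul] using sum_le_sum hz
  have hn : (n : K) - 1 < #S := lt_of_mul_lt_mul_left (by linarith) hM
  exact Nat.lt_succ_iff.mp (by exact_mod_cast (show (n : K) < #S + 1 by linarith))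

theorem sum_comp_eq_sum_univ_of_injOn {β A γ : Type*} [Fintype A] [DecidableEq A]
    [AddCommMonoid γ] {S : Finset β} {p : β → A} (hinj : Set.InjOn p S)
    (hcard : Fintype.card A ≤ #S) (φ : A → γ) : ∑ v ∈ S, φ (p v) = ∑ a, φ a := by
  have himage : S.image p = univ :=
    eq_univ_of_card _ (le_antisymm (card_le_univ _) (card_image_of_injOn hinj ▸ hcard))
  rw [← himage, sum_image hinj]

section KMatching

variable {A B : Type*} {P : A → Finset (Finset B)}

theorem kmGraph_fst_injOn_of_isIndepSet [DecidableEq B]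
    {S : Set {v : A × Finset B // v.2 ∈ P v.1}}
    (hS : (kmGraph P).IsIndepSet S) : S.InjOn (fun v => v.1.1) :=
  fun _ hu _ hv h => by_contra fun hne => hS hu hv hne ⟨hne, Or.inl h⟩

def assignmentVertex (g : A → Finset B) (hg : ∀ a, g a ∈ P a) (a : A) :
    {v : A × Finset B // v.2 ∈ P v.1} :=
  ⟨(a, g a), hg a⟩

theorem assignmentVertex_injective (g : A → Finset B) (hg : ∀ a, g a ∈ P a) :
    Function.Injective (assignmentVertex g hg) :=
  fun _ _ h => congrArg (fun v => v.1.1) h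

theorem isIndepSet_range_assignmentVertex [DecidableEq B] {g : A → Finset B}
    (hg : ∀ a, g a ∈ P a)
    (hdisj : ∀ a₁ a₂ : A, a₁ ≠ a₂ → g a₁ ∩ g a₂ = ∅) :
    (kmGraph P).IsIndepSet (Set.range (assignmentVertex g hg)) := by
  rintro _ ⟨a, rfl⟩ _ ⟨b, rfl⟩ hne ⟨-, hab | hinter⟩
  · exact hne (congrArg (assignmentVertex g hg) hab)
  · have hab : a ≠ b := fun h => hne (congrArg (assignmentVertex g hg) h)
    exact hinter.ne_empty (hdisj a b hab)

end KMatching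

theorem stmt_4_general {A B : Type*} [Fintype A] [DecidableEq A] [DecidableEq B]
    (P : A → Finset (Finset B))
    (w : A → Finset B → ℝ) (hw : ∀ a, ∀ j ∈ P a, 0 ≤ w a j)
    (M : ℝ) (hM : M = ∑ a, ∑ j ∈ P a, w a j)
    (S : Finset {v : A × Finset B // v.2 ∈ P v.1})
    (hSstable : ∀ u ∈ S, ∀ v ∈ S, ¬ (kmGraph P).Adj u v)
    (hSmax : ∀ S' : Finset {v : A × Finset B // v.2 ∈ P v.1},
      (∀ u ∈ S', ∀ v ∈ S', ¬ (kmGraph P).Adj u v) →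
      ∑ v ∈ S', (M - w v.1.1 v.1.2) ≤ ∑ v ∈ S, (M - w v.1.1 v.1.2))
    (hSgt : M * ((Fintype.card A : ℝ) - 1) < ∑ v ∈ S, (M - w v.1.1 v.1.2))
    (f : A → Finset B) (hfS : ∀ v ∈ S, f v.1.1 = v.1.2) :
    ∀ g : A → Finset B, (∀ a, g a ∈ P a) →
      (∀ a₁ a₂ : A, a₁ ≠ a₂ → g a₁ ∩ g a₂ = ∅) →
      ∑ a, w a (f a) ≤ ∑ a, w a (g a) := by
  intro g hg hdisj
  have hM0 : 0 ≤ M := hM ▸ sum_nonneg fun a _ => sum_nonneg (hw a)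
  have hinj := kmGraph_fst_injOn_of_isIndepSet fun u hu v hv _ => hSstable u hu v hv
  have hcard := le_card_of_mul_sub_one_lt_sum_s4 _ (fun v _ => sub_le_self M (hw _ _ v.2)) hM0 hSgt
  have hzS : ∑ v ∈ S, (M - w v.1.1 v.1.2) = ∑ a, (M - w a (f a)) := by
    rw [← sum_comp_eq_sum_univ_of_injOn hinj hcard]
    exact sum_congr rfl fun v hv => by rw [hfS v hv]
  set Sg := univ.image (assignmentVertex g hg)
  have hSg : (Sg : Set _) = Set.range (assignmentVertex g hg) := by simp [Sg]
  have hzSg : ∑ v ∈ Sg, (M - w v.1.1 v.1.2) = ∑ a, (M - w a (g a)) :=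
    sum_image fun a _ b _ h => assignmentVertex_injective g hg h
  have hmax := hSmax Sg fun u hu v hv hadj =>
    isIndepSet_range_assignmentVertex hg hdisj (hSg ▸ hu) (hSg ▸ hv) hadj.ne hadj
  rw [hzSg, hzS, sum_sub_distrib, sum_sub_distrib] at hmax
  linarith

/-- if `S` is a maximum-weight stable set of the associated graph with
`z(S) > M·(n_A − 1)` and `f` is the assignment defined by `f a = j` whenever
`(a,j) ∈ S`, then `f` is optimal: `w(f) ≤ w(g)` for every valid assignment `g`. -/
theorem stmt_4 {A B : Type*} [Fintype A] [DecidableEq A] [DecidableEq B]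
    (K : ℕ) (P : A → Finset (Finset B))
    (hPK : ∀ a, ∀ j ∈ P a, j.card ≤ K)
    (w : A → Finset B → ℝ) (hw : ∀ a, ∀ j ∈ P a, 0 ≤ w a j)
    (M : ℝ) (hM : M = ∑ a, ∑ j ∈ P a, w a j)
    (S : Finset {v : A × Finset B // v.2 ∈ P v.1})
    (hSstable : ∀ u ∈ S, ∀ v ∈ S, ¬ (kmGraph P).Adj u v)
    (hSmax : ∀ S' : Finset {v : A × Finset B // v.2 ∈ P v.1},
      (∀ u ∈ S', ∀ v ∈ S', ¬ (kmGraph P).Adj u v) →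
      ∑ v ∈ S', (M - w v.1.1 v.1.2) ≤ ∑ v ∈ S, (M - w v.1.1 v.1.2))
    (hSgt : M * ((Fintype.card A : ℝ) - 1) < ∑ v ∈ S, (M - w v.1.1 v.1.2))
    (f : A → Finset B) (hfS : ∀ v ∈ S, f v.1.1 = v.1.2) :
    ∀ g : A → Finset B, (∀ a, g a ∈ P a) →
      (∀ a₁ a₂ : A, a₁ ≠ a₂ → g a₁ ∩ g a₂ = ∅) →
      ∑ a, w a (f a) ≤ ∑ a, w a (g a) :=
  stmt_4_general P w hw M hM S hSstable hSmax hSgt f hfS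
end

section
/- Let K ≥ 1 and let G be the associated graph of any K-Matching instance. Then G is K_{1,K+2}-free: there is no vertex v of G together with K+2 pairwise non-adjacent vertices u₁, …, u_{K+2}, all distinct from v and all adjacent to v (equivalently, the star K_{1,K+2} is not an induced subgraph of G). -/
/-!
Let `v = (a, j)` and let `S` be an independent set of neighbours of `v`. Two distinct members
of `S` with the same first coordinate would be adjacent, so at most one member of `S` has first
coordinate `a`; every other member meets `j`, and the members of `S` have pairwise disjoint
sets, so they meet `j` in pairwise disjoint nonempty pieces and there are at most `#j ≤ K` of
them. Hence `#S ≤ K + 1 < K + 2`.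
-/

open Finset

theorem Finset.card_le_card_of_pairwiseDisjoint_of_inter_nonempty {ι α : Type*} [DecidableEq α]
    {t : Finset ι} {f : ι → Finset α} {s : Finset α} (hf : (t : Set ι).PairwiseDisjoint f)
    (hs : ∀ i ∈ t, (s ∩ f i).Nonempty) : #t ≤ #s :=
  calc #t ≤ #(t.biUnion (s ∩ f ·)) :=
        card_le_card_biUnion (hf.mono fun _ ↦ inf_le_right) hs
    _ ≤ #s := card_le_card (biUnion_subset.2 fun _ _ ↦ inter_subset_left)

namespace kmGraph

variable {A B : Type*} [DecidableEq B] {P : A → Finset (Finset B)}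

theorem fst_ne_and_disjoint_of_not_adj {v w : {v : A × Finset B // v.2 ∈ P v.1}} (hvw : v ≠ w)
    (h : ¬ (kmGraph P).Adj v w) : v.1.1 ≠ w.1.1 ∧ Disjoint v.1.2 w.1.2 := by
  simp only [kmGraph, ne_eq, hvw, not_false_eq_true, true_and, not_or,
    not_nonempty_iff_eq_empty] at h
  exact ⟨h.1, disjoint_iff_inter_eq_empty.2 h.2⟩

theorem card_le_of_isIndepSet_of_adj {v : {v : A × Finset B // v.2 ∈ P v.1}}
    {S : Finset {v : A × Finset B // v.2 ∈ P v.1}} (hS : (kmGraph P).IsIndepSet (S : Set _))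
    (hadj : ∀ w ∈ S, (kmGraph P).Adj v w) : #S ≤ #v.1.2 + 1 := by
  classical
  have h_same : #{w ∈ S | w.1.1 = v.1.1} ≤ 1 := by
    refine card_le_one.2 fun w hw w' hw' ↦ ?_
    rw [mem_filter] at hw hw'
    by_contra hne
    exact (fst_ne_and_disjoint_of_not_adj hne (hS hw.1 hw'.1 hne)).1 (hw.2.trans hw'.2.symm)
  have h_other : #{w ∈ S | ¬w.1.1 = v.1.1} ≤ #v.1.2 := by
    refine card_le_card_of_pairwiseDisjoint_of_inter_nonempty (f := fun w ↦ w.1.2) ?_ ?_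
    · intro w hw w' hw' hne
      exact (fst_ne_and_disjoint_of_not_adj hne
        (hS (mem_filter.1 hw).1 (mem_filter.1 hw').1 hne)).2
    · intro w hw
      rw [mem_filter] at hw
      exact (hadj w hw.1).2.resolve_left (Ne.symm hw.2)
  rw [← card_filter_add_card_filter_not (fun w ↦ w.1.1 = v.1.1)]
  omega

end kmGraph

theorem stmt_5_general {A B : Type*} [DecidableEq B]
    (K : ℕ) (P : A → Finset (Finset B))
    (hPK : ∀ a, ∀ j ∈ P a, j.card ≤ K) :
    ¬ ∃ (v : {v : A × Finset B // v.2 ∈ P v.1})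
        (u : Fin (K + 2) → {v : A × Finset B // v.2 ∈ P v.1}),
        Function.Injective u ∧
        (∀ i, u i ≠ v) ∧
        (∀ i, (kmGraph P).Adj v (u i)) ∧
        (∀ i i' : Fin (K + 2), i ≠ i' → ¬ (kmGraph P).Adj (u i) (u i')) := by
  classical
  rintro ⟨v, u, hinj, -, hadj, hnon⟩
  have h_indep : (kmGraph P).IsIndepSet (univ.image u : Set _) := by
    intro w hw w' hw' hne
    obtain ⟨i, -, rfl⟩ := mem_image.1 hw
    obtain ⟨i', -, rfl⟩ := mem_image.1 hw'
    exact hnon i i' (hinj.ne_iff.1 hne)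
  have h_card := kmGraph.card_le_of_isIndepSet_of_adj h_indep (by simpa using hadj)
  rw [card_image_of_injective _ hinj, card_univ, Fintype.card_fin] at h_card
  have h_v := hPK _ _ v.2
  omega

/-- the associated graph of any `K`-Matching instance (`K ≥ 1`) is
`K_{1,K+2}`-free: there is no vertex `v` together with `K+2` pairwise distinct,
pairwise non-adjacent vertices, all distinct from `v` and all adjacent to `v`. -/
theorem stmt_5 {A B : Type*} [DecidableEq B]
    (K : ℕ) (hK : 1 ≤ K) (P : A → Finset (Finset B))
    (hPK : ∀ a, ∀ j ∈ P a, j.card ≤ K) :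
    ¬ ∃ (v : {v : A × Finset B // v.2 ∈ P v.1})
        (u : Fin (K + 2) → {v : A × Finset B // v.2 ∈ P v.1}),
        Function.Injective u ∧
        (∀ i, u i ≠ v) ∧
        (∀ i, (kmGraph P).Adj v (u i)) ∧
        (∀ i i' : Fin (K + 2), i ≠ i' → ¬ (kmGraph P).Adj (u i) (u i')) :=
  stmt_5_general K P hPK
end

section
/- Let G be the associated graph of a 1-Matching instance, i.e., one in which every j ∈ P_a has cardinality at most 1. Then G is isomorphic to the line graph of a bipartite graph. Concretely, letting H be the bipartite graph with parts A and B ∪ {∅_a : a ∈ A, ∅ ∈ P_a} whose edges are {a, b} for each a ∈ A and {b} ∈ P_a, together with {a, ∅_a} for each a ∈ A with ∅ ∈ P_a, the map sending (a, {b}) to the edge {a,b} and (a, ∅) to the edge {a, ∅_a} is a graph isomorphism from G onto the line graph of H. -/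
/-- The bipartite graph `H` of a 1-Matching instance: one part is `A`, the other is
`B` together with a copy `∅_a` of `A` (used when `∅ ∈ P a`); the edges are `{a, b}`
for `{b} ∈ P a` and `{a, ∅_a}` for `∅ ∈ P a`. -/
def bipH {A B : Type*} (P : A → Finset (Finset B)) : SimpleGraph (A ⊕ (B ⊕ A)) where
  Adj x y :=
    (∃ a b, ({b} : Finset B) ∈ P a ∧
      ((x = Sum.inl a ∧ y = Sum.inr (Sum.inl b)) ∨
       (y = Sum.inl a ∧ x = Sum.inr (Sum.inl b)))) ∨
    (∃ a, (∅ : Finset B) ∈ P a ∧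
      ((x = Sum.inl a ∧ y = Sum.inr (Sum.inr a)) ∨
       (y = Sum.inl a ∧ x = Sum.inr (Sum.inr a))))
  symm := by
    constructor
    rintro x y (⟨a, b, hm, h | h⟩ | ⟨a, hm, h | h⟩)
    · exact Or.inl ⟨a, b, hm, Or.inr h⟩
    · exact Or.inl ⟨a, b, hm, Or.inl h⟩
    · exact Or.inr ⟨a, hm, Or.inr h⟩
    · exact Or.inr ⟨a, hm, Or.inl h⟩
  loopless := by
    constructor
    rintro x (⟨a, b, _, ⟨h1, h2⟩ | ⟨h1, h2⟩⟩ | ⟨a, _, ⟨h1, h2⟩ | ⟨h1, h2⟩⟩) <;>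
      simp_all

/-!
When every `j ∈ P a` has at most one element, the vertex `(a, j)` becomes the edge of `bipH P`
joining `a` to the unique element of `j`, or to the private vertex `∅_a` when `j = ∅`. Two such
edges meet exactly when they share `a` or share the element of `j`, which is adjacency in
`kmGraph P`; a vertex `∅_a` lies on a single edge, so it creates no further adjacencies.
-/

theorem Finset.eq_empty_or_exists_eq_singleton_of_card_le_one {α : Type*} {s : Finset α}
    (hs : s.card ≤ 1) : s = ∅ ∨ ∃ a, s = {a} := by
  rcases Nat.le_one_iff_eq_zero_or_eq_one.mp hs with h | h
  · exact .inl (Finset.card_eq_zero.mp h)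
  · exact .inr (Finset.card_eq_one.mp h)

theorem Sym2.inter_nonempty_inl_inr_iff {α β : Type*} (a a' : α) (x x' : β) :
    ((s(Sum.inl a, Sum.inr x) : Set (α ⊕ β)) ∩ s(Sum.inl a', Sum.inr x')).Nonempty ↔
      a = a' ∨ x = x' := by
  simp only [Set.Nonempty, Set.mem_inter_iff]
  aesop

section OneMatching

variable {A B : Type*}

/-- The endpoint of the edge representing `(a, j)`: `b` if `j = {b}`, and `∅_a` if `j = ∅`. -/
noncomputable def matchPartner (a : A) (j : Finset B) : B ⊕ A :=
  if h : j.Nonempty then Sum.inl h.choose else Sum.inr a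

@[simp]
theorem matchPartner_singleton (a : A) (b : B) : matchPartner a {b} = Sum.inl b := by
  simpa [matchPartner] using (Finset.singleton_nonempty b).choose_spec

@[simp]
theorem matchPartner_empty (a : A) : matchPartner a (∅ : Finset B) = Sum.inr a := by
  simp [matchPartner]

theorem matchPartner_injective {a : A} {j j' : Finset B} (hj : j.card ≤ 1) (hj' : j'.card ≤ 1)
    (h : matchPartner a j = matchPartner a j') : j = j' := by
  rcases j.eq_empty_or_exists_eq_singleton_of_card_le_one hj with rfl | ⟨b, rfl⟩ <;>
    rcases j'.eq_empty_or_exists_eq_singleton_of_card_le_one hj' with rfl | ⟨b', rfl⟩ <;>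
    simp_all

theorem eq_or_matchPartner_eq_iff [DecidableEq B] {a a' : A} {j j' : Finset B}
    (hj : j.card ≤ 1) (hj' : j'.card ≤ 1) :
    a = a' ∨ matchPartner a j = matchPartner a' j' ↔ a = a' ∨ (j ∩ j').Nonempty := by
  rcases j.eq_empty_or_exists_eq_singleton_of_card_le_one hj with rfl | ⟨b, rfl⟩ <;>
    rcases j'.eq_empty_or_exists_eq_singleton_of_card_le_one hj' with rfl | ⟨b', rfl⟩ <;>
    simp [Finset.Nonempty]

variable {P : A → Finset (Finset B)}

noncomputable def kmEdge (v : {v : A × Finset B // v.2 ∈ P v.1}) : Sym2 (A ⊕ (B ⊕ A)) :=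
  s(Sum.inl v.1.1, Sum.inr (matchPartner v.1.1 v.1.2))

theorem kmEdge_mem_edgeSet (hP : ∀ a, ∀ j ∈ P a, j.card ≤ 1)
    (v : {v : A × Finset B // v.2 ∈ P v.1}) : kmEdge v ∈ (bipH P).edgeSet := by
  obtain ⟨⟨a, j⟩, hj⟩ := v
  rcases j.eq_empty_or_exists_eq_singleton_of_card_le_one (hP a j hj) with rfl | ⟨b, rfl⟩
  · exact .inr ⟨a, hj, .inl ⟨rfl, by simp⟩⟩
  · exact .inl ⟨a, b, hj, .inl ⟨rfl, by simp⟩⟩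

theorem kmEdge_injective (hP : ∀ a, ∀ j ∈ P a, j.card ≤ 1) :
    Function.Injective (kmEdge (P := P)) := by
  rintro ⟨⟨a, j⟩, hj⟩ ⟨⟨a', j'⟩, hj'⟩ h
  obtain ⟨rfl, h⟩ : a = a' ∧ matchPartner a j = matchPartner a' j' := by simpa [kmEdge] using h
  simp [matchPartner_injective (hP a j hj) (hP a j' hj') h]

theorem exists_kmEdge_eq {e : Sym2 (A ⊕ (B ⊕ A))} (he : e ∈ (bipH P).edgeSet) :
    ∃ v, kmEdge (P := P) v = e := by
  induction e using Sym2.ind with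
  | _ x y =>
    rcases he with ⟨a, b, hb, ⟨rfl, rfl⟩ | ⟨rfl, rfl⟩⟩ | ⟨a, ha, ⟨rfl, rfl⟩ | ⟨rfl, rfl⟩⟩
    · exact ⟨⟨(a, {b}), hb⟩, by simp [kmEdge]⟩
    · exact ⟨⟨(a, {b}), hb⟩, by simp [kmEdge, Sym2.eq_swap]⟩
    · exact ⟨⟨(a, ∅), ha⟩, by simp [kmEdge]⟩
    · exact ⟨⟨(a, ∅), ha⟩, by simp [kmEdge, Sym2.eq_swap]⟩

theorem kmEdge_inter_nonempty_iff [DecidableEq B] (hP : ∀ a, ∀ j ∈ P a, j.card ≤ 1)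
    (v w : {v : A × Finset B // v.2 ∈ P v.1}) :
    ((kmEdge v : Set (A ⊕ (B ⊕ A))) ∩ kmEdge w).Nonempty ↔
      v.1.1 = w.1.1 ∨ (v.1.2 ∩ w.1.2).Nonempty := by
  rw [kmEdge, kmEdge, Sym2.inter_nonempty_inl_inr_iff,
    eq_or_matchPartner_eq_iff (hP _ _ v.2) (hP _ _ w.2)]

noncomputable def kmGraphIsoLineGraph [DecidableEq B] (hP : ∀ a, ∀ j ∈ P a, j.card ≤ 1) :
    kmGraph P ≃g (bipH P).lineGraph where
  toEquiv := Equiv.ofBijective (fun v => ⟨kmEdge v, kmEdge_mem_edgeSet hP v⟩)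
    ⟨fun _ _ h => kmEdge_injective hP (congrArg Subtype.val h),
      fun e => (exists_kmEdge_eq e.2).imp fun _ => Subtype.ext⟩
  map_rel_iff' {v w} :=
    and_congr (Equiv.injective _).ne_iff (kmEdge_inter_nonempty_iff hP v w)

theorem coe_kmGraphIsoLineGraph_apply [DecidableEq B] (hP : ∀ a, ∀ j ∈ P a, j.card ≤ 1)
    (v : {v : A × Finset B // v.2 ∈ P v.1}) :
    (kmGraphIsoLineGraph hP v : Sym2 (A ⊕ (B ⊕ A))) = kmEdge v :=
  rfl

end OneMatching

/-- the associated graph of a 1-Matching instance is isomorphic to the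
line graph of the bipartite graph `H`, via the map sending `(a, {b})` to the edge
`{a, b}` and `(a, ∅)` to the edge `{a, ∅_a}`. -/
theorem stmt_6 {A B : Type*} [DecidableEq B]
    (P : A → Finset (Finset B))
    (hP1 : ∀ a, ∀ j ∈ P a, j.card ≤ 1) :
    ∃ φ : kmGraph P ≃g SimpleGraph.lineGraph (bipH P),
      (∀ (a : A) (b : B) (h : ({b} : Finset B) ∈ P a),
        ((φ ⟨(a, {b}), h⟩ : (bipH P).edgeSet) : Sym2 (A ⊕ (B ⊕ A))) =
          s(Sum.inl a, Sum.inr (Sum.inl b))) ∧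
      (∀ (a : A) (h : (∅ : Finset B) ∈ P a),
        ((φ ⟨(a, ∅), h⟩ : (bipH P).edgeSet) : Sym2 (A ⊕ (B ⊕ A))) =
          s(Sum.inl a, Sum.inr (Sum.inr a))) :=
  ⟨kmGraphIsoLineGraph hP1,
    fun a b h => by simp [coe_kmGraphIsoLineGraph_apply, kmEdge],
    fun a h => by simp [coe_kmGraphIsoLineGraph_apply, kmEdge]⟩
end
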